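/- arXiv:2403.15564 — 3 statements merged into one kernel-verified Lean document; each statement's English description precedes it below -/
import Mathlib

section
/- If f : V₀ × V₁ × ⋯ × V_r → ℝ is a smooth function on a product of finite-dimensional real vector spaces and there exist b ∈ ℝ and positive reals a₀,…,a_r such that k^b · f(v₀,…,v_r) = f(k^{a₀}v₀, …, k^{a_r}v_r) for all k > 0 and all (v₀,…,v_r), then f is a sum of functions each of which is a polynomial, homogeneous of degree dᵢ in the variable vᵢ, where the dᵢ are non-negative integers satisfying a₀d₀ + ⋯ + a_r d_r = b. If no such non-negative integers exist, then f is identically zero. -/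
open scoped BigOperators
open Filter Set Topology



private lemma rpow_tendsto_zero {t : ℝ} (ht : 0 < t) :
    Filter.Tendsto (fun k : ℝ => k ^ t) (𝓝[>] (0:ℝ)) (𝓝 0) := by
  have h := (Real.continuousAt_rpow_const 0 t (Or.inr ht.le)).tendsto
  rw [Real.zero_rpow ht.ne'] at h
  exact h.mono_left nhdsWithin_le_nhds

private lemma coeff_vanish (M : ℝ) :
    ∀ s : Finset ℝ, ∀ c : ℝ → ℝ, ∀ C : ℝ,
      (∀ᶠ k in 𝓝[>] (0:ℝ), |∑ e ∈ s, c e * k ^ e| ≤ C * k ^ M) →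
      ∀ e ∈ s, e < M → c e = 0 := by
  intro s
  induction s using Finset.strongInduction with
  | _ s ih =>
    intro c C hC e he heM
    have hne : s.Nonempty := ⟨e, he⟩
    set e₀ := s.min' hne with he₀def
    have he₀M : e₀ < M := lt_of_le_of_lt (s.min'_le e he) heM
    have hmem₀ : e₀ ∈ s := s.min'_mem hne
    have hmain : c e₀ = 0 := by
      have h1 : Tendsto (fun k : ℝ => ∑ e' ∈ s.erase e₀, c e' * k ^ (e' - e₀))
          (𝓝[>] (0:ℝ)) (𝓝 0) := by
        have h0 : Tendsto (fun k : ℝ => ∑ e' ∈ s.erase e₀, c e' * k ^ (e' - e₀))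
            (𝓝[>] (0:ℝ)) (𝓝 (∑ e' ∈ s.erase e₀, c e' * 0)) := by
          apply tendsto_finset_sum
          intro e' he'
          have hgt : 0 < e' - e₀ := by
            have h2 := Finset.min'_le s e' (Finset.mem_of_mem_erase he')
            have h3 := Finset.ne_of_mem_erase he'
            have : e₀ < e' := lt_of_le_of_ne h2 (Ne.symm h3)
            linarith
          exact (rpow_tendsto_zero hgt).const_mul (c e')
        simpa using h0
      have h2 : Tendsto (fun k : ℝ => (∑ e' ∈ s, c e' * k ^ e') / k ^ e₀)
          (𝓝[>] (0:ℝ)) (𝓝 0) := by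
        have hgt : 0 < M - e₀ := by linarith
        have hlim : Tendsto (fun k : ℝ => C * k ^ (M - e₀)) (𝓝[>] (0:ℝ)) (𝓝 0) := by
          simpa using (rpow_tendsto_zero hgt).const_mul C
        apply squeeze_zero_norm' ?_ hlim
        filter_upwards [hC, self_mem_nhdsWithin] with k hk hk0
        have hk0' : (0:ℝ) < k := hk0
        have hpos : (0:ℝ) < k ^ e₀ := Real.rpow_pos_of_pos hk0' _
        rw [Real.norm_eq_abs, abs_div, abs_of_pos hpos, div_le_iff₀ hpos]
        calc |∑ e' ∈ s, c e' * k ^ e'| ≤ C * k ^ M := hk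
          _ = C * k ^ (M - e₀) * k ^ e₀ := by
              rw [mul_assoc, ← Real.rpow_add hk0']; ring_nf
      have h3 : ∀ᶠ k in 𝓝[>] (0:ℝ),
          (∑ e' ∈ s, c e' * k ^ e') / k ^ e₀
            - ∑ e' ∈ s.erase e₀, c e' * k ^ (e' - e₀) = c e₀ := by
        filter_upwards [self_mem_nhdsWithin] with k hk0
        have hk0' : (0:ℝ) < k := hk0
        have hne0 : (k : ℝ) ^ e₀ ≠ 0 := (Real.rpow_pos_of_pos hk0' _).ne'
        rw [← Finset.add_sum_erase _ _ hmem₀, add_div, mul_div_assoc,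
          div_self hne0, mul_one, Finset.sum_div]
        have : ∀ e' ∈ s.erase e₀, c e' * k ^ e' / k ^ e₀ = c e' * k ^ (e' - e₀) := by
          intro e' _
          rw [Real.rpow_sub hk0', mul_div_assoc]
        rw [Finset.sum_congr rfl this]
        ring
      have h4 : Tendsto (fun _ : ℝ => c e₀) (𝓝[>] (0:ℝ)) (𝓝 0) := by
        have := (h2.sub h1).congr' (by filter_upwards [h3] with k hk using hk)
        simpa using this
      exact tendsto_nhds_unique tendsto_const_nhds h4
    rcases eq_or_ne e e₀ with rfl | hne'
    · exact hmain
    · have hC' : ∀ᶠ k in 𝓝[>] (0:ℝ),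
          |∑ e' ∈ s.erase e₀, c e' * k ^ e'| ≤ C * k ^ M := by
        filter_upwards [hC] with k hk
        have : ∑ e' ∈ s, c e' * k ^ e' = c e₀ * k ^ e₀ + ∑ e' ∈ s.erase e₀, c e' * k ^ e' :=
          (Finset.add_sum_erase _ _ hmem₀).symm
        rw [this, hmain, zero_mul, zero_add] at hk
        exact hk
      exact ih (s.erase e₀) (Finset.erase_ssubset hmem₀) c C hC' e
        (Finset.mem_erase.mpr ⟨hne', he⟩) heM





private lemma taylor_bound_aux {E : Type*} [NormedAddCommGroup E] [NormedSpace ℝ E]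
    (f : E → ℝ) (hf : ContDiff ℝ (⊤ : ℕ∞) f) (N : ℕ) (K : ℝ)
    (hK : ∀ y : E, ‖y‖ ≤ 1 → ‖iteratedFDeriv ℝ (N + 1) f y‖ ≤ K)
    (x : E) (hx : ‖x‖ ≤ 1) :
    |f x - ∑ m ∈ Finset.range (N + 1),
        (Nat.factorial m : ℝ)⁻¹ * iteratedFDeriv ℝ m f 0 (fun _ => x)|
      ≤ K * ‖x‖ ^ (N + 1) / Nat.factorial N := by
  set L : ℝ →L[ℝ] E := ContinuousLinearMap.toSpanSingleton ℝ x with hL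
  set φ : ℝ → ℝ := f ∘ L with hφdef
  have hφ : ContDiff ℝ (⊤ : ℕ∞) φ := hf.comp L.contDiff
  have hiter : ∀ (m : ℕ) (t : ℝ),
      iteratedDeriv m φ t = iteratedFDeriv ℝ m f (t • x) (fun _ => x) := by
    intro m t
    rw [iteratedDeriv_eq_iteratedFDeriv, hφdef,
      L.iteratedFDeriv_comp_right hf t (by exact_mod_cast le_top)]
    simp [hL, ContinuousLinearMap.toSpanSingleton_apply]
  have hwithin : ∀ (m : ℕ), ∀ t ∈ Icc (0:ℝ) 1,
      iteratedDerivWithin m φ (Icc 0 1) t = iteratedDeriv m φ t := by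
    intro m t ht
    rw [iteratedDerivWithin_eq_iteratedFDerivWithin, iteratedDeriv_eq_iteratedFDeriv]
    have hφ' : ContDiff ℝ ((⊤ : ℕ∞) : WithTop ℕ∞) φ := hφ.of_le (by simp)
    have h := ((contDiff_iff_ftaylorSeries.mp hφ').hasFTaylorSeriesUpToOn
      (Icc (0:ℝ) 1)).eq_iteratedFDerivWithin_of_uniqueDiffOn (m := m) (by exact_mod_cast le_top)
      (uniqueDiffOn_Icc one_pos) ht
    rw [← h]
    rfl
  have hcd : ContDiffOn ℝ (N + 1) φ (Icc 0 1) := (hφ.of_le (by exact_mod_cast le_top)).contDiffOn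
  have hxpow : (0:ℝ) ≤ ‖x‖ ^ (N + 1) := by positivity
  have hC : ∀ t ∈ Icc (0:ℝ) 1,
      ‖iteratedDerivWithin (N + 1) φ (Icc 0 1) t‖ ≤ K * ‖x‖ ^ (N + 1) := by
    intro t ht
    rw [hwithin _ t ht, hiter]
    calc ‖iteratedFDeriv ℝ (N + 1) f (t • x) (fun _ => x)‖
        ≤ ‖iteratedFDeriv ℝ (N + 1) f (t • x)‖ * ∏ _i : Fin (N + 1), ‖x‖ :=
          (iteratedFDeriv ℝ (N + 1) f (t • x)).le_opNorm _
      _ ≤ K * ‖x‖ ^ (N + 1) := by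
          rw [Finset.prod_const, Finset.card_univ, Fintype.card_fin]
          have hK0 : (0:ℝ) ≤ K :=
            le_trans (norm_nonneg (iteratedFDeriv ℝ (N + 1) f (0 : E))) (hK 0 (by simp))
          have hsm : ‖t • x‖ ≤ 1 := by
            rw [norm_smul]
            calc ‖t‖ * ‖x‖ ≤ 1 * 1 := by
                  apply mul_le_mul _ hx (norm_nonneg _) zero_le_one
                  rw [Real.norm_eq_abs, abs_of_nonneg ht.1]; exact ht.2
              _ = 1 := mul_one 1
          exact mul_le_mul (hK _ hsm) le_rfl hxpow hK0
  have hmain := taylor_mean_remainder_bound (zero_le_one) hcd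
    (right_mem_Icc.mpr zero_le_one) hC
  have hty : taylorWithinEval φ N (Icc 0 1) 0 1
      = ∑ m ∈ Finset.range (N + 1),
          (Nat.factorial m : ℝ)⁻¹ * iteratedFDeriv ℝ m f 0 (fun _ => x) := by
    rw [taylor_within_apply]
    apply Finset.sum_congr rfl
    intro m hm
    rw [hwithin _ 0 (left_mem_Icc.mpr zero_le_one), hiter]
    rw [zero_smul]
    simp [smul_eq_mul]
  have hφ1 : φ 1 = f x := by
    simp [hφdef, hL, ContinuousLinearMap.toSpanSingleton_apply]
  rw [hty, hφ1] at hmain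
  rw [← Real.norm_eq_abs]
  calc ‖f x - ∑ m ∈ Finset.range (N + 1),
        (Nat.factorial m : ℝ)⁻¹ * iteratedFDeriv ℝ m f 0 (fun _ => x)‖
      ≤ K * ‖x‖ ^ (N + 1) * (1 - 0) ^ (N + 1) / Nat.factorial N := hmain
    _ = K * ‖x‖ ^ (N + 1) / Nat.factorial N := by norm_num

/-- Homogeneous Function Theorem, Kolar–Michor–Slovak: if
`f : V₀ × ⋯ × V_r → ℝ` is smooth on a product of finite-dimensional real vector
spaces and there are `b ∈ ℝ` and positive reals `a₀, …, a_r` with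
`k ^ b * f v = f (k ^ a₀ • v₀, …, k ^ a_r • v_r)` for all `k > 0`, then `f` is a
finite sum of functions, each of which is a polynomial homogeneous of degree `dᵢ`
in the variable `vᵢ` (the restriction to the partial diagonal of a multilinear map
with `dᵢ` slots of type `Vᵢ`), where the non-negative integers `dᵢ` satisfy
`a₀d₀ + ⋯ + a_r d_r = b`; and if no such non-negative integers exist, then `f` is
identically zero. -/
theorem homogeneous_function_theorem
    {r : ℕ} (V : Fin (r + 1) → Type*)
    [∀ i, NormedAddCommGroup (V i)] [∀ i, NormedSpace ℝ (V i)]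
    [∀ i, FiniteDimensional ℝ (V i)]
    (f : (∀ i, V i) → ℝ) (hf : ContDiff ℝ (⊤ : ℕ∞) f)
    (b : ℝ) (a : Fin (r + 1) → ℝ) (ha : ∀ i, 0 < a i)
    (hhom : ∀ k : ℝ, 0 < k → ∀ v : ∀ i, V i,
      k ^ b * f v = f (fun i => (k ^ a i) • v i)) :
    (∃ (S : Finset (Fin (r + 1) → ℕ)) (g : (Fin (r + 1) → ℕ) → ((∀ i, V i) → ℝ)),
        (∀ d ∈ S, ∑ i, a i * (d i : ℝ) = b) ∧
        (∀ v, f v = ∑ d ∈ S, g d v) ∧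
        (∀ d ∈ S, ∃ P : MultilinearMap ℝ
            (fun p : ((i : Fin (r + 1)) × Fin (d i)) => V p.1) ℝ,
            ∀ v, g d v = P (fun p => v p.1))) ∧
    ((¬ ∃ d : Fin (r + 1) → ℕ, ∑ i, a i * (d i : ℝ) = b) → ∀ v, f v = 0) := by
  classical
  -- minimal exponent
  obtain ⟨i₀, -, hamin⟩ := Finset.exists_min_image Finset.univ a ⟨0, Finset.mem_univ 0⟩
  set α : ℝ := a i₀ with hαdef
  have hα0 : 0 < α := ha i₀
  have hαle : ∀ i, α ≤ a i := fun i => hamin i (Finset.mem_univ i)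
  obtain ⟨N, hN⟩ := exists_nat_gt (b / α)
  set M : ℝ := α * (N + 1) with hMdef
  have hbM : b < M := by
    have h1 : b / α < (N:ℝ) + 1 := hN.trans (by norm_num)
    have := (div_lt_iff₀ hα0).mp h1
    rw [hMdef]; nlinarith
  -- basic objects
  set P : ∀ m : ℕ, ContinuousMultilinearMap ℝ (fun _ : Fin m => (∀ i, V i)) ℝ :=
    fun m => iteratedFDeriv ℝ m f 0 with hPdef
  set T : ∀ m : ℕ, (Fin m → Fin (r + 1)) → (∀ i, V i) → ℝ :=
    fun m c x => P m (fun j => Pi.single (c j) (x (c j))) with hTdef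
  set cnt : ∀ m : ℕ, (Fin m → Fin (r + 1)) → (Fin (r + 1) → ℕ) :=
    fun m c i => (Finset.univ.filter (fun j => c j = i)).card with hcntdef
  set D : Finset (Fin (r + 1) → ℕ) :=
    (Fintype.piFinset fun _ => Finset.range (N + 1)).filter (fun d => ∑ i, d i ≤ N)
    with hDdef
  set g : (Fin (r + 1) → ℕ) → (∀ i, V i) → ℝ :=
    fun d x => ∑ c ∈ Finset.univ.filter
        (fun c : Fin (∑ i, d i) → Fin (r + 1) => cnt _ c = d),
      (Nat.factorial (∑ i, d i) : ℝ)⁻¹ * T _ c x with hgdef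
  set ew : (Fin (r + 1) → ℕ) → ℝ := fun d => ∑ i, a i * d i with hewdef
  set S : Finset (Fin (r + 1) → ℕ) := D.filter (fun d => ew d = b) with hSdef
  -- Fact A : Taylor partial sum = sum over D of g d
  have factA : ∀ x : ∀ i, V i,
      ∑ m ∈ Finset.range (N + 1),
          (Nat.factorial m : ℝ)⁻¹ * iteratedFDeriv ℝ m f 0 (fun _ => x)
        = ∑ d ∈ D, g d x := by
    intro x
    have h1 : ∀ m : ℕ, iteratedFDeriv ℝ m f 0 (fun _ => x)
        = ∑ c : Fin m → Fin (r + 1), T m c x := by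
      intro m
      have h2 : (fun _ : Fin m => x) = (fun _ : Fin m => ∑ i, Pi.single i (x i)) := by
        funext _
        exact (Finset.univ_sum_single x).symm
      calc iteratedFDeriv ℝ m f 0 (fun _ => x)
          = (P m).toMultilinearMap (fun _ : Fin m => ∑ i, Pi.single i (x i)) := by
            rw [← h2]; rfl
        _ = ∑ c : Fin m → Fin (r + 1), (P m).toMultilinearMap
              (fun j => Pi.single (c j) (x (c j))) :=
            (P m).toMultilinearMap.map_sum (fun _ i => Pi.single i (x i))
        _ = ∑ c : Fin m → Fin (r + 1), T m c x := rfl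
    have hsumcnt : ∀ (m : ℕ) (c : Fin m → Fin (r + 1)), ∑ i, cnt m c i = m := by
      intro m c
      have h := Finset.card_eq_sum_card_fiberwise
        (f := c) (s := Finset.univ) (t := Finset.univ) (fun j _ => Finset.mem_univ (c j))
      simp only [Finset.card_univ, Fintype.card_fin] at h
      simpa [hcntdef] using h.symm
    have hmaps1 : ∀ m ∈ Finset.range (N + 1), ∀ c : Fin m → Fin (r + 1),
        cnt m c ∈ D.filter (fun d => ∑ i, d i = m) := by
      intro m hm c
      have hmN : m ≤ N := Nat.lt_succ_iff.mp (Finset.mem_range.mp hm)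
      rw [Finset.mem_filter]
      refine ⟨?_, hsumcnt m c⟩
      rw [hDdef, Finset.mem_filter]
      constructor
      · rw [Fintype.mem_piFinset]
        intro i
        rw [Finset.mem_range, Nat.lt_succ_iff]
        calc cnt m c i ≤ ∑ i', cnt m c i' :=
              Finset.single_le_sum (fun i' _ => Nat.zero_le _) (Finset.mem_univ i)
          _ = m := hsumcnt m c
          _ ≤ N := hmN
      · rw [hsumcnt m c]; exact hmN
    calc ∑ m ∈ Finset.range (N + 1),
          (Nat.factorial m : ℝ)⁻¹ * iteratedFDeriv ℝ m f 0 (fun _ => x)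
        = ∑ m ∈ Finset.range (N + 1), ∑ c : Fin m → Fin (r + 1),
            (Nat.factorial m : ℝ)⁻¹ * T m c x := by
          apply Finset.sum_congr rfl
          intro m _
          rw [h1 m, Finset.mul_sum]
      _ = ∑ m ∈ Finset.range (N + 1), ∑ d ∈ D.filter (fun d => ∑ i, d i = m),
            ∑ c ∈ Finset.univ.filter (fun c : Fin m → Fin (r + 1) => cnt m c = d),
              (Nat.factorial m : ℝ)⁻¹ * T m c x := by
          apply Finset.sum_congr rfl
          intro m hm
          exact (Finset.sum_fiberwise_of_maps_to (fun c _ => hmaps1 m hm c) _).symm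
      _ = ∑ m ∈ Finset.range (N + 1), ∑ d ∈ D.filter (fun d => ∑ i, d i = m),
            g d x := by
          apply Finset.sum_congr rfl
          intro m hm
          apply Finset.sum_congr rfl
          intro d hd
          have hdm : ∑ i, d i = m := (Finset.mem_filter.mp hd).2
          subst hdm
          simp only [hgdef]
      _ = ∑ d ∈ D, g d x := by
          apply Finset.sum_fiberwise_of_maps_to
          intro d hd
          rw [Finset.mem_range, Nat.lt_succ_iff]
          exact (Finset.mem_filter.mp hd).2
  -- Fact B : scaling of g d
  have factB : ∀ d : Fin (r + 1) → ℕ, ∀ k : ℝ, 0 < k → ∀ v : ∀ i, V i,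
      g d (fun i => (k ^ a i) • v i) = k ^ ew d * g d v := by
    intro d k hk v
    simp only [hgdef]
    rw [Finset.mul_sum]
    apply Finset.sum_congr rfl
    intro c hc
    have hcnt : cnt _ c = d := (Finset.mem_filter.mp hc).2
    have hT : T _ c (fun i => (k ^ a i) • v i) = k ^ ew d * T _ c v := by
      simp only [hTdef]
      have h1 : (fun j => Pi.single (c j) (((fun i => (k ^ a i) • v i)) (c j)))
          = fun j => (k ^ a (c j)) • Pi.single (c j) (v (c j)) := by
        funext j
        exact Pi.single_smul (c j) _ _
      rw [h1, ContinuousMultilinearMap.map_smul_univ, smul_eq_mul]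
      congr 1
      rw [← Real.rpow_sum_of_pos hk]
      congr 1
      have h2 : ∑ j, a (c j)
          = ∑ i, ∑ j ∈ Finset.univ.filter (fun j => c j = i), a (c j) :=
        (Finset.sum_fiberwise_of_maps_to (fun j _ => Finset.mem_univ (c j)) _).symm
      rw [h2, hewdef]
      apply Finset.sum_congr rfl
      intro i _
      calc ∑ j ∈ Finset.univ.filter (fun j => c j = i), a (c j)
          = ∑ j ∈ Finset.univ.filter (fun j => c j = i), a i :=
            Finset.sum_congr rfl (fun j hj => by rw [(Finset.mem_filter.mp hj).2])
        _ = ((Finset.univ.filter (fun j => c j = i)).card : ℕ) • a i := by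
            rw [Finset.sum_const]
        _ = a i * d i := by
            have hci : (Finset.univ.filter (fun j => c j = i)).card = d i := by
              have := congrFun hcnt i
              simpa [hcntdef] using this
            rw [nsmul_eq_mul, hci, mul_comm]
    rw [hT]
    ring
  -- Fact C : bound on (N+1)-st derivative on the unit ball
  have factC : ∃ K : ℝ, ∀ y : ∀ i, V i, ‖y‖ ≤ 1 →
      ‖iteratedFDeriv ℝ (N + 1) f y‖ ≤ K := by
    have hcont : Continuous fun y : ∀ i, V i => iteratedFDeriv ℝ (N + 1) f y :=
      hf.continuous_iteratedFDeriv (by exact_mod_cast le_top)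
    obtain ⟨K, hK⟩ := (isCompact_closedBall (0 : ∀ i, V i) 1).exists_bound_of_continuousOn
      hcont.continuousOn
    exact ⟨K, fun y hy => hK y (by rwa [Metric.mem_closedBall, dist_zero_right])⟩
  obtain ⟨K, hK⟩ := factC
  -- Fact E : the representation f v = ∑ d ∈ S, g d v
  have hK0 : (0:ℝ) ≤ K := le_trans (norm_nonneg _) (hK 0 (by simp))
  have factE : ∀ v : ∀ i, V i, f v = ∑ d ∈ S, g d v := by
    intro v
    have hv1 : (0:ℝ) < ‖v‖ + 1 := by positivity
    set Cv : ℝ := K * (‖v‖ + 1) ^ (N + 1) / Nat.factorial N with hCvdef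
    have hEv : ∀ᶠ k in 𝓝[>] (0:ℝ),
        |∑ d ∈ D, g d v * k ^ ew d - f v * k ^ b| ≤ Cv * k ^ M := by
      set δ₂ : ℝ := ((‖v‖ + 1)⁻¹) ^ (α⁻¹) with hδ₂def
      have hδ₂0 : 0 < δ₂ := Real.rpow_pos_of_pos (by positivity) _
      have hδ0 : 0 < min 1 δ₂ := lt_min one_pos hδ₂0
      have hIoo : Ioo (0:ℝ) (min 1 δ₂) ∈ 𝓝[>] (0:ℝ) :=
        Ioo_mem_nhdsGT_of_mem ⟨le_refl 0, hδ0⟩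
      filter_upwards [hIoo] with k hkmem
      obtain ⟨hk0, hkδ⟩ := hkmem
      have hk1 : k ≤ 1 := le_of_lt (lt_of_lt_of_le hkδ (min_le_left _ _))
      have hkδ₂ : k ≤ δ₂ := le_of_lt (lt_of_lt_of_le hkδ (min_le_right _ _))
      have hkα0 : (0:ℝ) < k ^ α := Real.rpow_pos_of_pos hk0 _
      have hkα : k ^ α * (‖v‖ + 1) ≤ 1 := by
        have h1 : k ^ α ≤ δ₂ ^ α := Real.rpow_le_rpow hk0.le hkδ₂ hα0.le
        have h2 : δ₂ ^ α = (‖v‖ + 1)⁻¹ := by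
          rw [hδ₂def, ← Real.rpow_mul (by positivity), inv_mul_cancel₀ hα0.ne',
            Real.rpow_one]
        rw [h2] at h1
        calc k ^ α * (‖v‖ + 1) ≤ (‖v‖ + 1)⁻¹ * (‖v‖ + 1) :=
              mul_le_mul_of_nonneg_right h1 hv1.le
          _ = 1 := inv_mul_cancel₀ hv1.ne'
      set y : ∀ i, V i := fun i => (k ^ a i) • v i with hydef
      have hynorm : ‖y‖ ≤ k ^ α * (‖v‖ + 1) := by
        apply (pi_norm_le_iff_of_nonneg (by positivity)).mpr
        intro i
        rw [hydef]
        calc ‖(k ^ a i) • v i‖ = k ^ a i * ‖v i‖ := by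
              rw [norm_smul, Real.norm_eq_abs,
                abs_of_pos (Real.rpow_pos_of_pos hk0 _)]
          _ ≤ k ^ α * (‖v‖ + 1) := by
              apply mul_le_mul
              · exact Real.rpow_le_rpow_of_exponent_ge hk0 hk1 (hαle i)
              · exact (norm_le_pi_norm v i).trans (by linarith)
              · exact norm_nonneg _
              · exact hkα0.le
      have hy1 : ‖y‖ ≤ 1 := hynorm.trans hkα
      have htb := taylor_bound_aux f hf N K hK y hy1
      have hfy : f y = k ^ b * f v := (hhom k hk0 v).symm
      have hsum : ∑ m ∈ Finset.range (N + 1), (Nat.factorial m : ℝ)⁻¹ *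
          iteratedFDeriv ℝ m f 0 (fun _ => y) = ∑ d ∈ D, g d v * k ^ ew d := by
        rw [factA y]
        apply Finset.sum_congr rfl
        intro d _
        rw [hydef, factB d k hk0 v]
        ring
      rw [hfy, hsum] at htb
      have habs : |∑ d ∈ D, g d v * k ^ ew d - f v * k ^ b|
          = |k ^ b * f v - ∑ d ∈ D, g d v * k ^ ew d| := by
        rw [abs_sub_comm, mul_comm]
      rw [habs]
      calc |k ^ b * f v - ∑ d ∈ D, g d v * k ^ ew d|
          ≤ K * ‖y‖ ^ (N + 1) / Nat.factorial N := htb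
        _ ≤ K * (k ^ α * (‖v‖ + 1)) ^ (N + 1) / Nat.factorial N := by
            gcongr
        _ = Cv * k ^ M := by
            rw [hCvdef, hMdef, mul_pow]
            rw [← Real.rpow_natCast (k ^ α) (N + 1), ← Real.rpow_mul hk0.le]
            push_cast
            ring
    set Ev : Finset ℝ := insert b (D.image ew) with hEvdef
    set coef : ℝ → ℝ := fun ε => (∑ d ∈ D.filter (fun d' => ew d' = ε), g d v)
      - (if ε = b then f v else 0) with hcoefdef
    have hsum2 : ∀ k : ℝ, ∑ ε ∈ Ev, coef ε * k ^ ε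
        = ∑ d ∈ D, g d v * k ^ ew d - f v * k ^ b := by
      intro k
      simp only [hcoefdef, sub_mul, ite_mul, zero_mul]
      rw [Finset.sum_sub_distrib]
      congr 1
      · rw [← Finset.sum_fiberwise_of_maps_to (g := ew) (t := Ev)
          (fun d hd => Finset.mem_insert_of_mem (Finset.mem_image_of_mem ew hd))
          (fun d => g d v * k ^ ew d)]
        apply Finset.sum_congr rfl
        intro ε _
        rw [Finset.sum_mul]
        apply Finset.sum_congr rfl
        intro d hd
        rw [(Finset.mem_filter.mp hd).2]
      · rw [Finset.sum_ite_eq' Ev b (fun ε => f v * k ^ ε)]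
        simp [hEvdef]
    have hfinal := coeff_vanish M Ev coef Cv
      (by filter_upwards [hEv] with k hk; rw [hsum2 k]; exact hk)
      b (Finset.mem_insert_self _ _) hbM
    have hfv : ∑ d ∈ D.filter (fun d' => ew d' = b), g d v = f v := by
      simp only [hcoefdef, if_pos rfl, if_true] at hfinal
      linarith
    rw [hSdef]
    exact hfv.symm
  -- Fact F : multilinear representation
  have factF : ∀ d : Fin (r + 1) → ℕ,
      ∃ P' : MultilinearMap ℝ (fun p : ((i : Fin (r + 1)) × Fin (d i)) => V p.1) ℝ,
        ∀ v, g d v = P' (fun p => v p.1) := by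
    intro d
    set m : ℕ := ∑ i, d i with hmdef
    set Fl : Finset (Fin m → Fin (r + 1)) :=
      Finset.univ.filter (fun c => cnt m c = d) with hFldef
    have hcard : ∀ c : Fin m → Fin (r + 1), c ∈ Fl → ∀ i : Fin (r + 1),
        Fintype.card {j : Fin m // c j = i} = d i := by
      intro c hc i
      rw [Fintype.card_subtype]
      have := congrFun (Finset.mem_filter.mp hc).2 i
      simpa [hcntdef] using this
    let eqvf : ∀ c : {c // c ∈ Fl}, ((i : Fin (r + 1)) × Fin (d i)) ≃ Fin m := fun c =>
      (Equiv.sigmaCongrRight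
        (fun i => (Fintype.equivFinOfCardEq (hcard c.1 c.2 i)).symm)).trans
        (Equiv.sigmaFiberEquiv c.1)
    have heqv : ∀ (c : {c // c ∈ Fl}) (p : (i : Fin (r + 1)) × Fin (d i)),
        c.1 (eqvf c p) = p.1 := by
      intro c p
      exact ((Fintype.equivFinOfCardEq (hcard c.1 c.2 p.1)).symm p.2).2
    refine ⟨∑ c ∈ Fl.attach, (Nat.factorial m : ℝ)⁻¹ •
      (((P m).toMultilinearMap.domDomCongr (eqvf c).symm).compLinearMap
        (fun p => LinearMap.single ℝ V p.1)), ?_⟩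
    intro v
    rw [MultilinearMap.sum_apply]
    have hptwise : ∀ c : {c // c ∈ Fl},
        ((Nat.factorial m : ℝ)⁻¹ •
          (((P m).toMultilinearMap.domDomCongr (eqvf c).symm).compLinearMap
            (fun p => LinearMap.single ℝ V p.1))) (fun p => v p.1)
          = (Nat.factorial m : ℝ)⁻¹ * T m c.1 v := by
      intro c
      rw [MultilinearMap.smul_apply, MultilinearMap.compLinearMap_apply,
        MultilinearMap.domDomCongr_apply, smul_eq_mul]
      have hj : ∀ j : Fin m, ((eqvf c).symm j).1 = c.1 j := by
        intro j
        have h := heqv c ((eqvf c).symm j)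
        rwa [Equiv.apply_symm_apply] at h
      have harg : (fun j : Fin m =>
            LinearMap.single ℝ V ((eqvf c).symm j).1 (v ((eqvf c).symm j).1))
          = fun j : Fin m => Pi.single (c.1 j) (v (c.1 j)) := by
        funext j
        rw [hj j, LinearMap.coe_single]
      rw [harg]
      rfl
    rw [Finset.sum_congr rfl (fun c _ => hptwise c)]
    simp only [hgdef]
    exact (Finset.sum_attach Fl (fun c => (Nat.factorial m : ℝ)⁻¹ * T m c v)).symm
  refine ⟨⟨S, g, ?_, factE, fun d _ => factF d⟩, ?_⟩
  · intro d hd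
    have := (Finset.mem_filter.mp hd).2
    simpa [hewdef] using this
  · intro hno v
    have hSempty : S = ∅ := by
      apply Finset.eq_empty_of_forall_notMem
      intro d hd
      exact hno ⟨d, by simpa [hewdef] using (Finset.mem_filter.mp hd).2⟩
    rw [factE v, hSempty, Finset.sum_empty]
end

section
/- A smooth function f : V → ℝ on a finite-dimensional real vector space satisfying f(k·v) = k^n · f(v) for all k > 0 and all v ∈ V, where n is a fixed non-negative integer, is a homogeneous polynomial of degree n. -/
lemma iteratedDeriv_const_mul_pow (m : ℕ) (c : ℝ) :
    iteratedDeriv m (fun x : ℝ => c * x ^ m) = fun _ => (m.factorial : ℝ) * c := by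
  induction m generalizing c with
  | zero => funext x; simp [iteratedDeriv_zero]
  | succ m ih =>
    rw [iteratedDeriv_succ']
    have hd : deriv (fun x : ℝ => c * x ^ (m + 1)) = fun x : ℝ => (c * (m + 1)) * x ^ m := by
      funext x
      rw [deriv_const_mul _ (differentiableAt_pow _), deriv_pow_field]
      simp only [Nat.add_sub_cancel]
      push_cast
      ring
    rw [hd, ih]
    funext x
    push_cast [Nat.factorial_succ]
    ring

/-- single-variable Homogeneous Function Theorem: a smooth function
`f : V → ℝ` on a finite-dimensional real vector space satisfying
`f (k • v) = k ^ n * f v` for all `k > 0` and all `v`, with `n` a fixed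
non-negative integer, is a homogeneous polynomial of degree `n`; i.e. it is the
restriction to the diagonal of an `n`-multilinear map. -/
theorem smooth_positively_homogeneous_is_polynomial
    {V : Type*} [NormedAddCommGroup V] [NormedSpace ℝ V] [FiniteDimensional ℝ V]
    (n : ℕ) (f : V → ℝ) (hf : ContDiff ℝ (⊤ : ℕ∞) f)
    (hhom : ∀ k : ℝ, 0 < k → ∀ v : V, f (k • v) = k ^ n * f v) :
    ∃ P : MultilinearMap ℝ (fun _ : Fin n => V) ℝ, ∀ v : V, f v = P (fun _ => v) := by
  refine ⟨((n.factorial : ℝ)⁻¹ • iteratedFDeriv ℝ n f 0).toMultilinearMap, fun v => ?_⟩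
  set L : ℝ →L[ℝ] V := ContinuousLinearMap.toSpanSingleton ℝ v with hL
  have hh : ContDiff ℝ (⊤ : ℕ∞) (f ∘ L) := hf.comp L.contDiff
  -- value of the iterated derivative of f ∘ L
  have key : ∀ t : ℝ, iteratedDeriv n (f ∘ L) t = (iteratedFDeriv ℝ n f (t • v)) (fun _ => v) := by
    intro t
    rw [iteratedDeriv, L.iteratedFDeriv_comp_right hf t (by exact_mod_cast le_top)]
    simp [L, ContinuousLinearMap.toSpanSingleton_apply]
  -- on positive reals, f ∘ L equals t ↦ t^n * f v, hence iterated derivs agree there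
  have hpos : ∀ t : ℝ, 0 < t → iteratedDeriv n (f ∘ L) t = (n.factorial : ℝ) * f v := by
    intro t ht
    have heq : (f ∘ L) =ᶠ[nhds t] (fun s : ℝ => f v * s ^ n) := by
      filter_upwards [Ioi_mem_nhds ht] with s hs
      simp only [Function.comp_apply, L, ContinuousLinearMap.toSpanSingleton_apply]
      rw [hhom s hs v]; ring
    have : iteratedDeriv n (f ∘ L) t = iteratedDeriv n (fun s : ℝ => f v * s ^ n) t := by
      simp only [iteratedDeriv]
      congr 1
      rw [← iteratedFDerivWithin_univ, ← iteratedFDerivWithin_univ]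
      apply Filter.EventuallyEq.iteratedFDerivWithin_eq
      · rw [nhdsWithin_univ]; exact heq
      · exact heq.self_of_nhds
    rw [this, iteratedDeriv_const_mul_pow]
  -- continuity of the iterated derivative at 0
  have hcont : ContinuousAt (iteratedDeriv n (f ∘ L)) 0 :=
    (hh.continuous_iteratedDeriv n (by exact_mod_cast le_top)).continuousAt
  have hlim1 : Filter.Tendsto (iteratedDeriv n (f ∘ L)) (nhdsWithin 0 (Set.Ioi 0))
      (nhds (iteratedDeriv n (f ∘ L) 0)) := hcont.continuousWithinAt.tendsto
  have hlim2 : Filter.Tendsto (iteratedDeriv n (f ∘ L)) (nhdsWithin 0 (Set.Ioi 0))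
      (nhds ((n.factorial : ℝ) * f v)) := by
    refine Filter.Tendsto.congr' ?_ tendsto_const_nhds
    filter_upwards [self_mem_nhdsWithin] with t ht
    exact (hpos t ht).symm
  have h0 : iteratedDeriv n (f ∘ L) 0 = (n.factorial : ℝ) * f v :=
    tendsto_nhds_unique hlim1 hlim2
  have hval : (iteratedFDeriv ℝ n f 0) (fun _ => v) = (n.factorial : ℝ) * f v := by
    have hk := key 0
    rw [zero_smul] at hk
    rw [← hk]
    exact h0
  have hn : (n.factorial : ℝ) ≠ 0 := Nat.cast_ne_zero.mpr n.factorial_ne_zero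
  show f v = (n.factorial : ℝ)⁻¹ • ((iteratedFDeriv ℝ n f 0) fun _ => v)
  rw [hval, smul_eq_mul]
  field_simp
end

section
/- A smooth function f : V → ℝ on a nonzero finite-dimensional real vector space satisfying f(k·v) = k^b · f(v) for all k > 0, where b is a positive real number that is not a non-negative integer, is identically zero. -/
open Filter Topology

lemma aux_homog {V : Type*} [NormedAddCommGroup V] [NormedSpace ℝ V] :
    ∀ (n : ℕ) (c : ℝ), c < n → (∀ m : ℕ, c ≠ (m : ℝ)) →
    ∀ h : V → ℝ, ContDiff ℝ (⊤ : ℕ∞) h →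
    (∀ k : ℝ, 0 < k → ∀ v : V, h (k • v) = k ^ c * h v) → ∀ v : V, h v = 0 := by
  intro n
  induction n with
  | zero =>
    intro c hc _ h hsm hhom v
    have hc0 : (0:ℝ) < -c := by
      have h' : c < 0 := by exact_mod_cast hc
      linarith
    have A : Tendsto (fun k : ℝ => k ^ (-c)) (𝓝[>] 0) (𝓝 0) := by
      have := (Real.continuousAt_rpow_const 0 (-c) (Or.inr hc0.le)).tendsto
      rw [Real.zero_rpow (ne_of_gt hc0)] at this
      exact this.mono_left nhdsWithin_le_nhds
    have B : Tendsto (fun k : ℝ => h (k • v)) (𝓝[>] 0) (𝓝 (h 0)) := by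
      have : Tendsto (fun k : ℝ => h (k • v)) (𝓝 0) (𝓝 (h ((0:ℝ) • v))) :=
        (hsm.continuous.comp (continuous_id.smul continuous_const)).tendsto 0
      rw [zero_smul] at this
      exact this.mono_left nhdsWithin_le_nhds
    have C : Tendsto (fun k : ℝ => k ^ (-c) * h (k • v)) (𝓝[>] 0) (𝓝 0) := by
      simpa using A.mul B
    have D : (fun k : ℝ => k ^ (-c) * h (k • v)) =ᶠ[𝓝[>] (0:ℝ)] (fun _ => h v) := by
      filter_upwards [self_mem_nhdsWithin] with k hk
      have hk' : (0:ℝ) < k := hk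
      rw [hhom k hk' v, ← mul_assoc, ← Real.rpow_add hk', neg_add_cancel, Real.rpow_zero,
        one_mul]
    exact tendsto_nhds_unique tendsto_const_nhds (C.congr' D)
  | succ n ih =>
    intro c hc hne h hsm hhom
    rcases lt_or_gt_of_ne (hne n) with hlt | hgt
    · exact ih c hlt hne h hsm hhom
    have hcpos : 0 < c := lt_of_le_of_lt (Nat.cast_nonneg n) hgt
    have hdiff : Differentiable ℝ h := hsm.differentiable (by simp)
    have h0 : h 0 = 0 := by
      have := hhom 2 (by norm_num) 0
      rw [smul_zero] at this
      have h1 : (1:ℝ) < (2:ℝ) ^ c := by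
        rw [show (1:ℝ) = (2:ℝ) ^ (0:ℝ) by simp]
        exact Real.rpow_lt_rpow_left_iff (by norm_num) |>.mpr hcpos
      nlinarith [this]
    have hg : ∀ w v : V, fderiv ℝ h v w = 0 := by
      intro w
      have gsm : ContDiff ℝ (⊤ : ℕ∞) (fun v : V => fderiv ℝ h v w) :=
        (hsm.fderiv_right (by simp)).clm_apply contDiff_const
      have ghom : ∀ k : ℝ, 0 < k → ∀ v : V,
          fderiv ℝ h (k • v) w = k ^ (c - 1) * fderiv ℝ h v w := by
        intro k hk v
        have Hin : HasFDerivAt (fun x : V => k • x) (k • ContinuousLinearMap.id ℝ V) v :=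
          (hasFDerivAt_id v).const_smul k
        have Hcomp : HasFDerivAt (fun x : V => h (k • x))
            ((fderiv ℝ h (k • v)).comp (k • ContinuousLinearMap.id ℝ V)) v :=
          (hdiff (k • v)).hasFDerivAt.comp v Hin
        have Hrhs : HasFDerivAt (fun x : V => k ^ c * h x) ((k ^ c) • fderiv ℝ h v) v :=
          (hdiff v).hasFDerivAt.const_mul (k ^ c)
        have Heq : (fun x : V => h (k • x)) = fun x : V => k ^ c * h x :=
          funext fun x => hhom k hk x
        rw [Heq] at Hcomp
        have Hd := Hcomp.unique Hrhs
        have := congrArg (fun L : V →L[ℝ] ℝ => L w) Hd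
        simp only [ContinuousLinearMap.coe_comp', Function.comp_apply,
          ContinuousLinearMap.smul_apply, ContinuousLinearMap.coe_id', id_eq,
          smul_eq_mul] at this
        rw [map_smul, smul_eq_mul] at this
        have hkne : k ≠ 0 := ne_of_gt hk
        have hpow : k ^ (c - 1) = k ^ c / k := by
          rw [Real.rpow_sub hk, Real.rpow_one]
        rw [hpow]
        field_simp
        linarith [this]
      intro v
      have hlt' : c - 1 < n := by
        have : c < n + 1 := by exact_mod_cast hc
        linarith
      have hne' : ∀ m : ℕ, c - 1 ≠ (m : ℝ) := by
        intro m hm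
        apply hne (m + 1)
        push_cast
        linarith
      exact ih (c - 1) hlt' hne' _ gsm ghom v
    have hzero : ∀ v : V, fderiv ℝ h v = 0 := fun v =>
      ContinuousLinearMap.ext fun w => by simpa using hg w v
    intro v
    calc h v = h 0 := is_const_of_fderiv_eq_zero hdiff hzero v 0
    _ = 0 := h0

/-- a smooth function `f : V → ℝ` on a nonzero finite-dimensional real
vector space satisfying `f (k • v) = k ^ b * f v` for all `k > 0` (real power),
where `b > 0` is not a non-negative integer, is identically zero. -/
theorem smooth_homogeneous_nonintegral_degree_eq_zero
    {V : Type*} [NormedAddCommGroup V] [NormedSpace ℝ V] [FiniteDimensional ℝ V]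
    [Nontrivial V]
    (b : ℝ) (hb : 0 < b) (hbn : ∀ n : ℕ, b ≠ (n : ℝ))
    (f : V → ℝ) (hf : ContDiff ℝ (⊤ : ℕ∞) f)
    (hhom : ∀ k : ℝ, 0 < k → ∀ v : V, f (k • v) = k ^ b * f v) :
    ∀ v : V, f v = 0 := by
  obtain ⟨n, hn⟩ := exists_nat_gt b
  exact aux_homog n b hn hbn f hf hhom
end
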